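/- Let ℓ be a natural number and W₁, W₂ ∈ ℂ^{ℓ×ℓ} be such that the ℓ×2ℓ block matrix [W₁ W₂] has full row rank ℓ and W₁W₂* + W₂W₁* is positive semidefinite. Then the range relation {(W₂*x, −W₁*x) : x ∈ ℂ^ℓ} is a maximally dissipative linear relation on ℂ^ℓ: it satisfies Re⟨W₂*x, −W₁*x⟩ ≤ 0 for all x ∈ ℂ^ℓ, and every dissipative linear relation on ℂ^ℓ containing it equals it. -/

import Mathlib

/-!
The quadratic form of the range relation is `Re⟨W₂* x, −W₁* x⟩ = −½ ⟨x, (W₁W₂* + W₂W₁*) x⟩ ≤ 0`,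
and the full row rank of `[W₁ W₂]` makes `x ↦ (W₂* x, −W₁* x)` injective, so the relation has
dimension `ℓ`. Conversely, on a dissipative relation `(f, g) ↦ f − g` is injective, since
`f = g` forces `Re⟨f, f⟩ ≤ 0`; hence every dissipative relation has dimension at most `ℓ`, and
one containing the range relation must equal it.
-/

open Matrix
open scoped ComplexOrder

/-- The range relation `{(W₂* x, −W₁* x) : x ∈ ℂ^ℓ}` as a linear relation on `ℂ^ℓ`. -/
noncomputable def ranRel {ℓ : ℕ} (W₁ W₂ : Matrix (Fin ℓ) (Fin ℓ) ℂ) :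
    Submodule ℂ ((Fin ℓ → ℂ) × (Fin ℓ → ℂ)) :=
  LinearMap.range ((W₂ᴴ).mulVecLin.prod (-(W₁ᴴ).mulVecLin))

/-- A linear relation `T` on `ℂ^ℓ` is dissipative if `Re ⟨f, g⟩ ≤ 0` for all `(f, g) ∈ T`,
where `⟨f, g⟩ = ∑ i, conj (f i) * g i` is the standard Hermitian inner product. -/
def IsDissipativeRel {ℓ : ℕ} (T : Submodule ℂ ((Fin ℓ → ℂ) × (Fin ℓ → ℂ))) : Prop :=
  ∀ p ∈ T, (star p.1 ⬝ᵥ p.2).re ≤ 0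

/-- A linear relation is maximally dissipative if it is dissipative and every dissipative
linear relation containing it equals it. -/
def IsMaxDissipativeRel {ℓ : ℕ} (T : Submodule ℂ ((Fin ℓ → ℂ) × (Fin ℓ → ℂ))) : Prop :=
  IsDissipativeRel T ∧ ∀ T' : Submodule ℂ ((Fin ℓ → ℂ) × (Fin ℓ → ℂ)),
    IsDissipativeRel T' → T ≤ T' → T' = T

theorem Matrix.vecMul_injective_of_rank_eq_card {K m n : Type*} [Field K] [Fintype m] [Fintype n]
    (A : Matrix m n K) (h : A.rank = Fintype.card m) : Function.Injective fun v => v ᵥ* A :=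
  vecMul_injective_iff.mpr <|
    linearIndependent_iff_card_eq_finrank_span.mpr (h.symm.trans A.rank_eq_finrank_span_row)

theorem Matrix.re_star_dotProduct_conjTranspose_mulVec {n : Type*} [Fintype n]
    (A : Matrix n n ℂ) (x : n → ℂ) : (star x ⬝ᵥ Aᴴ *ᵥ x).re = (star x ⬝ᵥ A *ᵥ x).re := by
  rw [star_dotProduct, star_mulVec, conjTranspose_conjTranspose, ← dotProduct_mulVec,
    Complex.star_def, Complex.conj_re]

theorem eq_zero_of_re_star_dotProduct_self_nonpos {n : Type*} [Fintype n] {v : n → ℂ}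
    (h : (star v ⬝ᵥ v).re ≤ 0) : v = 0 := by
  obtain ⟨hre, him⟩ := Complex.le_def.mp (dotProduct_star_self_nonneg v)
  refine dotProduct_star_self_eq_zero.mp (Complex.ext ?_ ?_)
  · exact le_antisymm h hre
  · exact him.symm

section RangeRelation

variable {ℓ : ℕ} {W₁ W₂ : Matrix (Fin ℓ) (Fin ℓ) ℂ}

theorem ranRel_isDissipative (hpos : (W₁ * W₂ᴴ + W₂ * W₁ᴴ).PosSemidef) :
    IsDissipativeRel (ranRel W₁ W₂) := by
  rintro _ ⟨x, rfl⟩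
  have hform : 0 ≤ (star x ⬝ᵥ (W₁ * W₂ᴴ + W₂ * W₁ᴴ) *ᵥ x).re :=
    (Complex.le_def.mp (hpos.dotProduct_mulVec_nonneg x)).1
  have hpair : star (W₂ᴴ *ᵥ x) ⬝ᵥ -(W₁ᴴ *ᵥ x) = -(star x ⬝ᵥ (W₂ * W₁ᴴ) *ᵥ x) := by
    rw [dotProduct_neg, star_mulVec, conjTranspose_conjTranspose, ← dotProduct_mulVec,
      mulVec_mulVec]
  have hsym : (star x ⬝ᵥ (W₁ * W₂ᴴ) *ᵥ x).re = (star x ⬝ᵥ (W₂ * W₁ᴴ) *ᵥ x).re := by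
    simpa only [conjTranspose_mul, conjTranspose_conjTranspose] using
      re_star_dotProduct_conjTranspose_mulVec (W₂ * W₁ᴴ) x
  rw [add_mulVec, dotProduct_add, Complex.add_re, hsym] at hform
  simp only [LinearMap.prod_apply, Function.prod_apply, mulVecLin_apply, LinearMap.neg_apply, hpair,
    Complex.neg_re]
  linarith

theorem ranRel_map_injective (hrank : (fromCols W₁ W₂).rank = ℓ) :
    Function.Injective ((W₂ᴴ).mulVecLin.prod (-(W₁ᴴ).mulVecLin)) := by
  rw [← LinearMap.ker_eq_bot, Submodule.eq_bot_iff]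
  intro x hx
  simp only [LinearMap.mem_ker, LinearMap.prod_apply, Function.prod_apply, mulVecLin_apply,
    LinearMap.neg_apply, Prod.mk_eq_zero, neg_eq_zero] at hx
  have hrow (W : Matrix (Fin ℓ) (Fin ℓ) ℂ) (hW : Wᴴ *ᵥ x = 0) : star x ᵥ* W = 0 := by
    simpa only [star_mulVec, conjTranspose_conjTranspose, star_zero] using congrArg star hW
  have hcols : star x ᵥ* fromCols W₁ W₂ = 0 ᵥ* fromCols W₁ W₂ := by
    rw [vecMul_fromCols, hrow W₁ hx.2, hrow W₂ hx.1, zero_vecMul]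
    exact Sum.elim_zero_zero
  exact star_eq_zero.mp
    ((fromCols W₁ W₂).vecMul_injective_of_rank_eq_card (by simpa using hrank) hcols)

theorem finrank_ranRel (hrank : (fromCols W₁ W₂).rank = ℓ) :
    Module.finrank ℂ (ranRel W₁ W₂) = ℓ := by
  rw [ranRel, LinearMap.finrank_range_of_inj (ranRel_map_injective hrank), Module.finrank_fin_fun]

end RangeRelation

section Dissipative

variable {ℓ : ℕ} {T : Submodule ℂ ((Fin ℓ → ℂ) × (Fin ℓ → ℂ))}

theorem IsDissipativeRel.finrank_le (hT : IsDissipativeRel T) : Module.finrank ℂ T ≤ ℓ := by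
  let diff := (LinearMap.fst ℂ (Fin ℓ → ℂ) (Fin ℓ → ℂ) - LinearMap.snd ℂ _ _).domRestrict T
  have hdiff : Function.Injective diff := by
    rw [← LinearMap.ker_eq_bot, Submodule.eq_bot_iff]
    rintro ⟨p, hp⟩ hker
    have hsnd : p.2 = p.1 := (sub_eq_zero.mp hker).symm
    have hfst : p.1 = 0 := eq_zero_of_re_star_dotProduct_self_nonpos (hsnd ▸ hT p hp)
    exact Subtype.ext (Prod.ext hfst (hsnd.trans hfst))
  simpa using LinearMap.finrank_le_finrank_of_injective hdiff

theorem IsDissipativeRel.isMaxDissipativeRel_of_finrank_eq (hT : IsDissipativeRel T)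
    (hdim : Module.finrank ℂ T = ℓ) : IsMaxDissipativeRel T :=
  ⟨hT, fun _ hT' hle => (Submodule.eq_of_le_of_finrank_le hle (hT'.finrank_le.trans hdim.ge)).symm⟩

end Dissipative

theorem ranRel_isMaxDissipative (ℓ : ℕ) (W₁ W₂ : Matrix (Fin ℓ) (Fin ℓ) ℂ)
    (hrank : (Matrix.fromCols W₁ W₂).rank = ℓ)
    (hpos : (W₁ * W₂ᴴ + W₂ * W₁ᴴ).PosSemidef) :
    IsMaxDissipativeRel (ranRel W₁ W₂) :=
  (ranRel_isDissipative hpos).isMaxDissipativeRel_of_finrank_eq (finrank_ranRel hrank)
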